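/- Let α ∈ (0,1) and define γ(α) = √(α² − α + 1/2) + α − 1/2 if α ≤ 1/2, and γ(α) = √(α² − α + 1/2) − α + 1/2 if α > 1/2. Then for every real t > 0 with (1 − α)t ≠ α, (t² + 1) / (4(t + 1)|(1 − α)t − α|) ≥ γ(α). -/

import Mathlib

noncomputable def gammaUnif (α : ℝ) : ℝ :=
  if α ≤ 1 / 2 then Real.sqrt (α ^ 2 - α + 1 / 2) + α - 1 / 2
  else Real.sqrt (α ^ 2 - α + 1 / 2) - α + 1 / 2

/-!
Writing `m = |α - 1/2|`, we have `γ(α) = √(m² + 1/4) - m`, the nonnegative root of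
`g² + 2 m g = 1/4`. Clearing the denominator, the claim becomes
`± 4 γ (t + 1) ((1 - α) t - α) ≤ t² + 1`; for either sign this is a quadratic inequality in `t`
whose discriminant is `16 (γ² ± (1 - 2α) γ) - 4`, which is `≤ 0` exactly because of the
equation satisfied by `γ`.
-/

theorem quadratic_nonneg_of_discrim_nonpos {R : Type*} [CommRing R] [LinearOrder R]
    [IsStrictOrderedRing R] {a b c : R} (hac : 0 < a + c) (h : discrim a b c ≤ 0) (x : R) :
    0 ≤ a * (x * x) + b * x + c := by
  rw [discrim] at h
  have key : 4 * (a + c) * (a * (x * x) + b * x + c) =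
      (2 * a * x + b) ^ 2 + (2 * c + b * x) ^ 2 + (4 * a * c - b ^ 2) * (1 + x ^ 2) := by
    ring
  have hpos : 0 < 4 * (a + c) := by positivity
  refine nonneg_of_mul_nonneg_right ?_ hpos
  rw [key]
  have : 0 ≤ (4 * a * c - b ^ 2) * (1 + x ^ 2) := mul_nonneg (by linarith) (by positivity)
  positivity

theorem mul_le_sq_add_one_of_sq_add_abs_mul_le {α g ε : ℝ} (hg : 0 ≤ g)
    (hgα : g ^ 2 + |1 - 2 * α| * g ≤ 1 / 4) (hε : |ε| ≤ 1) (t : ℝ) :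
    4 * g * ε * ((t + 1) * ((1 - α) * t - α)) ≤ t ^ 2 + 1 := by
  have hcross : g * ε * (1 - 2 * α) ≤ |1 - 2 * α| * g := by
    calc g * ε * (1 - 2 * α) ≤ |g * ε * (1 - 2 * α)| := le_abs_self _
      _ = g * |ε| * |1 - 2 * α| := by rw [abs_mul, abs_mul, abs_of_nonneg hg]
      _ ≤ g * 1 * |1 - 2 * α| := by gcongr
      _ = |1 - 2 * α| * g := by ring
  have hquad := quadratic_nonneg_of_discrim_nonpos
    (a := 1 - 4 * g * ε * (1 - α)) (b := -(4 * g * ε * (1 - 2 * α))) (c := 1 + 4 * g * ε * α)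
    (by nlinarith [sq_nonneg g]) ?_ t
  · linear_combination hquad
  · have hε2 : ε ^ 2 ≤ 1 := by nlinarith [sq_abs ε, abs_nonneg ε]
    rw [discrim]
    nlinarith [mul_le_mul_of_nonneg_left hε2 (sq_nonneg g)]

theorem four_mul_abs_mul_le_sq_add_one {α g : ℝ} (hg : 0 ≤ g)
    (hgα : g ^ 2 + |1 - 2 * α| * g ≤ 1 / 4) (t : ℝ) :
    4 * g * |(t + 1) * ((1 - α) * t - α)| ≤ t ^ 2 + 1 := by
  rw [mul_comm, ← abs_of_nonneg (by positivity : 0 ≤ 4 * g), ← abs_mul, abs_le']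
  constructor
  · simpa [mul_comm, mul_assoc] using
      mul_le_sq_add_one_of_sq_add_abs_mul_le hg hgα (ε := 1) (by simp) t
  · simpa [mul_comm, mul_assoc] using
      mul_le_sq_add_one_of_sq_add_abs_mul_le hg hgα (ε := -1) (by simp) t

theorem gammaUnif_eq_sqrt_sub_abs (α : ℝ) :
    gammaUnif α = √(α ^ 2 - α + 1 / 2) - |α - 1 / 2| := by
  unfold gammaUnif
  split_ifs with h
  · rw [abs_of_nonpos (by linarith)]; ring
  · rw [abs_of_pos (by linarith)]; ring

theorem gammaUnif_nonneg (α : ℝ) : 0 ≤ gammaUnif α := by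
  rw [gammaUnif_eq_sqrt_sub_abs, sub_nonneg]
  exact Real.abs_le_sqrt (by nlinarith)

theorem gammaUnif_sq_add_abs_mul (α : ℝ) :
    gammaUnif α ^ 2 + |1 - 2 * α| * gammaUnif α = 1 / 4 := by
  have hs : √(α ^ 2 - α + 1 / 2) ^ 2 = α ^ 2 - α + 1 / 2 := Real.sq_sqrt (by nlinarith)
  have hm : |1 - 2 * α| = 2 * |α - 1 / 2| := by
    rw [show 1 - 2 * α = -2 * (α - 1 / 2) by ring, abs_mul]; norm_num
  rw [gammaUnif_eq_sqrt_sub_abs, hm]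
  linear_combination hs - sq_abs (α - 1 / 2)

theorem stmt_13_general (α : ℝ) (t : ℝ) (ht : 0 < t)
    (hne : (1 - α) * t ≠ α) :
    gammaUnif α ≤ (t ^ 2 + 1) / (4 * (t + 1) * |(1 - α) * t - α|) := by
  have hD : 0 < |(1 - α) * t - α| := abs_pos.mpr (sub_ne_zero.mpr hne)
  rw [le_div_iff₀ (by positivity)]
  have := four_mul_abs_mul_le_sq_add_one (gammaUnif_nonneg α)
    (gammaUnif_sq_add_abs_mul α).le t
  rw [abs_mul, abs_of_pos (by linarith : 0 < t + 1)] at this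
  linarith

theorem stmt_13 (α : ℝ) (hα0 : 0 < α) (hα1 : α < 1) (t : ℝ) (ht : 0 < t)
    (hne : (1 - α) * t ≠ α) :
    gammaUnif α ≤ (t ^ 2 + 1) / (4 * (t + 1) * |(1 - α) * t - α|) :=
  stmt_13_general α t ht hne
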